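/- arXiv:0807.2953 — 4 statements merged into one kernel-verified Lean document; each statement's English description precedes it below -/
import Mathlib

section
/- There exists a constant c > 0 such that for all natural numbers n ≥ 1, the Favard length of the n-th generation K_n of the four-corner Cantor set satisfies Fav(K_n) ≥ c/n. -/
open MeasureTheory Real Set

noncomputable section

/-- Digit value: `false ↦ 0`, `true ↦ 3`. -/
def dig (b : Bool) : ℝ := if b then 3 else 0

/-- Left endpoint `x_a = ∑ a_j 4^{-j}` of the interval coded by the word `a ∈ {0,3}^n`. -/
def cantorX {n : ℕ} (a : Fin n → Bool) : ℝ :=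
  ∑ j : Fin n, dig (a j) * (4 : ℝ) ^ (-((j : ℕ) + 1) : ℤ)

/-- The `n`-th generation `C_n` of the middle-half Cantor set. -/
def cantorC (n : ℕ) : Set ℝ :=
  ⋃ a : Fin n → Bool, Icc (cantorX a) (cantorX a + (4 : ℝ) ^ (-(n : ℤ)))

/-- The `n`-th generation `K_n = C_n × C_n` of the four-corner Cantor set. -/
def cantorK (n : ℕ) : Set (ℝ × ℝ) := cantorC n ×ˢ cantorC n

/-- The square `Q_{a,b}` of side `4^{-n}` of the `n`-th generation. -/
def cantorSq {n : ℕ} (a b : Fin n → Bool) : Set (ℝ × ℝ) :=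
  Icc (cantorX a) (cantorX a + (4 : ℝ) ^ (-(n : ℤ))) ×ˢ
    Icc (cantorX b) (cantorX b + (4 : ℝ) ^ (-(n : ℤ)))

/-- Orthogonal projection in direction `θ`: `proj_θ (x, y) = x cos θ + y sin θ`. -/
def projAngle (θ : ℝ) (p : ℝ × ℝ) : ℝ := p.1 * Real.cos θ + p.2 * Real.sin θ

/-- The Favard length of a planar set. -/
def favard (E : Set (ℝ × ℝ)) : ℝ :=
  (1 / π) * ∫ θ in (0 : ℝ)..π, (volume (projAngle θ '' E)).toReal

end

/-!
For a fixed direction `θ`, the projection of `K_n` is a union of `4^n` intervals of length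
`≍ 4^{-n}`, so by Cauchy–Schwarz its length is at least `1 / (4 · 4^{-n} · N(θ))`, where `N(θ)`
counts the pairs of squares whose projected corners are `4 · 4^{-n}`-close. Two squares whose
addresses first differ at level `k` have corners at distance `≳ 4^{-k}`, so their projections are
close only for a set of directions of measure `O(4^{k-n})`; summing over all pairs gives
`∫ N ≲ n 4^n` over `θ ∈ (0, π/4]`. A second Cauchy–Schwarz, now in `θ`, turns this bound into
`∫ |proj_θ K_n| dθ ≳ 1/n`.
-/

open scoped ENNReal

section CauchySchwarz

variable {α : Type*} [MeasurableSpace α] {μ : Measure α}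

theorem lintegral_mul_sq_le {f g : α → ℝ≥0∞} (hf : AEMeasurable f μ) (hg : AEMeasurable g μ) :
    (∫⁻ a, f a * g a ∂μ) ^ 2 ≤ (∫⁻ a, f a ^ 2 ∂μ) * ∫⁻ a, g a ^ 2 ∂μ := by
  have h := ENNReal.lintegral_mul_le_Lp_mul_Lq μ Real.HolderConjugate.two_two hf hg
  simp only [ENNReal.rpow_two, Pi.mul_apply] at h
  calc (∫⁻ a, f a * g a ∂μ) ^ 2
      ≤ ((∫⁻ a, f a ^ 2 ∂μ) ^ (1 / 2 : ℝ) * (∫⁻ a, g a ^ 2 ∂μ) ^ (1 / 2 : ℝ)) ^ 2 := by gcongr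
    _ = _ := by
      rw [mul_pow, ← ENNReal.rpow_two, ← ENNReal.rpow_two, ← ENNReal.rpow_mul, ← ENNReal.rpow_mul]
      norm_num

theorem mul_measure_univ_sq_le_lintegral_mul_lintegral {P N : α → ℝ≥0∞} (hP : AEMeasurable P μ)
    (hN : AEMeasurable N μ) {c : ℝ≥0∞} (hc : ∀ a, c ≤ P a * N a) :
    c * μ univ ^ 2 ≤ (∫⁻ a, P a ∂μ) * ∫⁻ a, N a ∂μ := by
  have hsq : ∀ x : ℝ≥0∞, (x ^ (1 / 2 : ℝ)) ^ 2 = x := fun x => by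
    rw [← ENNReal.rpow_two, ← ENNReal.rpow_mul]; norm_num
  have hlow : c ^ (1 / 2 : ℝ) * μ univ ≤ ∫⁻ a, P a ^ (1 / 2 : ℝ) * N a ^ (1 / 2 : ℝ) ∂μ := by
    rw [← lintegral_const]
    refine lintegral_mono fun a => ?_
    rw [← ENNReal.mul_rpow_of_nonneg _ _ (by norm_num)]
    exact ENNReal.rpow_le_rpow (hc a) (by norm_num)
  calc c * μ univ ^ 2 = (c ^ (1 / 2 : ℝ) * μ univ) ^ 2 := by rw [mul_pow, hsq]
    _ ≤ (∫⁻ a, P a ^ (1 / 2 : ℝ) * N a ^ (1 / 2 : ℝ) ∂μ) ^ 2 := by gcongr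
    _ ≤ _ := lintegral_mul_sq_le (hP.pow_const _) (hN.pow_const _)
    _ = _ := by simp only [hsq]

theorem sq_sum_measure_le_measure_iUnion_mul {ι : Type*} [Fintype ι] {s : ι → Set α}
    (hs : ∀ i, MeasurableSet (s i)) :
    (∑ i, μ (s i)) ^ 2 ≤ μ (⋃ i, s i) * ∑ i, ∑ j, μ (s i ∩ s j) := by
  set f : α → ℝ≥0∞ := fun a => ∑ i, (s i).indicator 1 a
  set U := ⋃ i, s i
  have hf : Measurable f := Finset.measurable_sum _ fun i _ => measurable_one.indicator (hs i)
  have hU : MeasurableSet U := MeasurableSet.iUnion hs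
  have hfU : ∀ a, f a * U.indicator 1 a = f a := by
    intro a
    by_cases ha : a ∈ U
    · simp [indicator_of_mem ha]
    · have : ∀ i, a ∉ s i := fun i hi => ha (mem_iUnion.2 ⟨i, hi⟩)
      simp [f, indicator_of_notMem ha, this]
  have hf2 : ∀ a, f a ^ 2 = ∑ i, ∑ j, (s i ∩ s j).indicator 1 a := by
    intro a
    simp only [f, sq, Finset.sum_mul_sum, inter_indicator_one, Pi.mul_apply]
  have hU2 : ∀ a, U.indicator (1 : α → ℝ≥0∞) a ^ 2 = U.indicator 1 a := by
    intro a; by_cases ha : a ∈ U <;> simp [ha]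
  have hmeas : ∀ i j, Measurable ((s i ∩ s j).indicator (1 : α → ℝ≥0∞)) :=
    fun i j => measurable_one.indicator ((hs i).inter (hs j))
  have := lintegral_mul_sq_le hf.aemeasurable (measurable_one.indicator hU).aemeasurable (μ := μ)
  simp only [hfU, hf2, hU2] at this
  simp only [f, lintegral_finsetSum _ fun i _ => measurable_one.indicator (hs i),
    lintegral_finsetSum _ fun i _ => Finset.measurable_sum _ fun j _ => hmeas i j,
    lintegral_finsetSum _ fun j _ => hmeas _ j, lintegral_indicator_one (hs _),
    lintegral_indicator_one ((hs _).inter (hs _)), lintegral_indicator_one hU] at this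
  rwa [mul_comm]

end CauchySchwarz

section Projections

theorem projAngle_sub (θ : ℝ) (p q : ℝ × ℝ) :
    projAngle θ (p - q) = projAngle θ p - projAngle θ q := by
  simp only [projAngle, Prod.fst_sub, Prod.snd_sub]; ring

theorem continuous_projAngle (θ : ℝ) : Continuous (projAngle θ) := by
  unfold projAngle; fun_prop

def closedSquare (p : ℝ × ℝ) (d : ℝ) : Set (ℝ × ℝ) :=
  Icc p.1 (p.1 + d) ×ˢ Icc p.2 (p.2 + d)

theorem isCompact_closedSquare (p : ℝ × ℝ) (d : ℝ) : IsCompact (closedSquare p d) :=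
  isCompact_Icc.prod isCompact_Icc

theorem projAngle_image_closedSquare_subset (θ : ℝ) (p : ℝ × ℝ) (d : ℝ) :
    projAngle θ '' closedSquare p d ⊆ Icc (projAngle θ p - 2 * d) (projAngle θ p + 2 * d) := by
  rintro _ ⟨q, ⟨⟨h1, h2⟩, h3, h4⟩, rfl⟩
  have := Real.neg_one_le_cos θ; have := Real.cos_le_one θ
  have := Real.neg_one_le_sin θ; have := Real.sin_le_one θ
  simp only [projAngle, mem_Icc]
  constructor <;> nlinarith

theorem ofReal_le_volume_projAngle_image_closedSquare (θ : ℝ) (p : ℝ × ℝ) {d : ℝ} (hd : 0 ≤ d) :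
    ENNReal.ofReal d ≤ volume (projAngle θ '' closedSquare p d) := by
  have hconn : (projAngle θ '' closedSquare p d).OrdConnected :=
    isPreconnected_iff_ordConnected.1 <| (isPreconnected_Icc.prod isPreconnected_Icc).image _
      (continuous_projAngle θ).continuousOn
  have hmem : ∀ s t, 0 ≤ s → s ≤ d → 0 ≤ t → t ≤ d →
      projAngle θ p + s * cos θ + t * sin θ ∈ projAngle θ '' closedSquare p d := by
    intro s t hs hs' ht ht'
    refine ⟨(p.1 + s, p.2 + t), ⟨⟨?_, ?_⟩, ?_, ?_⟩, ?_⟩ <;> simp only [projAngle] <;> linarith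
  have hvol : ∀ a b, a ∈ projAngle θ '' closedSquare p d → b ∈ projAngle θ '' closedSquare p d →
      d ≤ |b - a| → ENNReal.ofReal d ≤ volume (projAngle θ '' closedSquare p d) := by
    intro a b ha hb hab
    calc ENNReal.ofReal d ≤ ENNReal.ofReal |b - a| := ENNReal.ofReal_le_ofReal hab
      _ = volume (uIcc a b) := Real.volume_interval.symm
      _ ≤ _ := measure_mono (hconn.uIcc_subset ha hb)
  -- the two diagonals of the square project to lengths `d |cos θ + sin θ|` and `d |cos θ - sin θ|`
  have hdiag : 1 ≤ |cos θ + sin θ| ∨ 1 ≤ |cos θ - sin θ| := by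
    by_contra! h
    have := sin_sq_add_cos_sq θ
    nlinarith [abs_nonneg (cos θ + sin θ), abs_nonneg (cos θ - sin θ), sq_abs (cos θ + sin θ),
      sq_abs (cos θ - sin θ)]
  rcases hdiag with h | h
  · refine hvol _ _ (hmem 0 0 le_rfl hd le_rfl hd) (hmem d d hd le_rfl hd le_rfl) ?_
    rw [show projAngle θ p + d * cos θ + d * sin θ - (projAngle θ p + 0 * cos θ + 0 * sin θ)
      = d * (cos θ + sin θ) by ring, abs_mul, abs_of_nonneg hd]
    nlinarith
  · refine hvol _ _ (hmem 0 d le_rfl hd hd le_rfl) (hmem d 0 hd le_rfl le_rfl hd) ?_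
    rw [show projAngle θ p + d * cos θ + 0 * sin θ - (projAngle θ p + 0 * cos θ + d * sin θ)
      = d * (cos θ - sin θ) by ring, abs_mul, abs_of_nonneg hd]
    nlinarith

theorem measurable_volume_projAngle_image {E : Set (ℝ × ℝ)} (hE : IsCompact E) :
    Measurable fun θ => volume (projAngle θ '' E) := by
  -- `{(θ, z) | z ∈ projAngle θ '' E}` is the image of a closed subset of `(ℝ × ℝ) × E` under a
  -- projection with compact fibre `E`, hence closed.
  have : CompactSpace E := isCompact_iff_compactSpace.1 hE
  set T : Set ((ℝ × ℝ) × E) := {x | x.1.2 = projAngle x.1.1 x.2}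
  have hT : IsClosed T := isClosed_eq (by fun_prop) (by unfold projAngle; fun_prop)
  have hS : MeasurableSet (Prod.fst '' T) := (isClosedMap_fst_of_compactSpace T hT).measurableSet
  convert measurable_measure_prodMk_left (ν := volume) hS using 3 with θ
  ext z
  constructor
  · rintro ⟨p, hp, rfl⟩
    exact ⟨((θ, projAngle θ p), ⟨p, hp⟩), rfl, rfl⟩
  · rintro ⟨⟨q, p⟩, hq, rfl⟩
    exact ⟨p, p.2, hq.symm⟩

theorem exists_volume_projAngle_image_le {E : Set (ℝ × ℝ)} (hE : IsCompact E) :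
    ∃ C, ∀ θ, volume (projAngle θ '' E) ≤ ENNReal.ofReal C := by
  obtain ⟨R, hR⟩ := hE.isBounded.subset_closedBall 0
  refine ⟨4 * R, fun θ => ?_⟩
  have hsub : projAngle θ '' E ⊆ Icc (-(2 * R)) (2 * R) := by
    rintro _ ⟨p, hp, rfl⟩
    have hp := mem_closedBall_zero_iff.1 (hR hp)
    have h₁ : |p.1| ≤ R := (norm_fst_le p).trans hp
    have h₂ : |p.2| ≤ R := (norm_snd_le p).trans hp
    have : |projAngle θ p| ≤ 2 * R := by
      calc |projAngle θ p| ≤ |p.1| * |cos θ| + |p.2| * |sin θ| := by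
            rw [projAngle, ← abs_mul, ← abs_mul]; exact abs_add_le _ _
        _ ≤ R * 1 + R * 1 := by
            have hR0 : 0 ≤ R := (abs_nonneg _).trans h₁
            gcongr
            exacts [abs_cos_le_one θ, abs_sin_le_one θ]
        _ = 2 * R := by ring
    exact abs_le.1 this
  calc volume (projAngle θ '' E) ≤ volume (Icc (-(2 * R)) (2 * R)) := measure_mono hsub
    _ = ENNReal.ofReal (4 * R) := by rw [Real.volume_Icc]; ring_nf

theorem div_pi_le_favard {E : Set (ℝ × ℝ)} (hE : IsCompact E) {c : ℝ}
    (hc : ENNReal.ofReal c ≤ ∫⁻ θ in Ioc 0 π, volume (projAngle θ '' E)) : c / π ≤ favard E := by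
  obtain ⟨C, hC⟩ := exists_volume_projAngle_image_le hE
  have hfin : ∫⁻ θ in Ioc 0 π, volume (projAngle θ '' E) ≠ ⊤ := by
    refine ne_top_of_le_ne_top ?_ (lintegral_mono hC)
    simp [Real.volume_Ioc, ENNReal.mul_eq_top]
  rw [favard, intervalIntegral.integral_of_le pi_pos.le, integral_toReal
    (measurable_volume_projAngle_image hE).aemeasurable
    (ae_of_all _ fun θ => (hE.image (continuous_projAngle θ)).measure_lt_top), one_div_mul_eq_div]
  gcongr
  exact (ENNReal.ofReal_le_iff_le_toReal hfin).1 hc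

end Projections

section NearPairs

noncomputable def nearPairs {ι : Type*} [Fintype ι] (c : ι → ℝ × ℝ) (ρ θ : ℝ) : ℝ≥0∞ :=
  ∑ p : ι × ι, {θ | |projAngle θ (c p.1 - c p.2)| ≤ ρ}.indicator 1 θ

theorem measurableSet_abs_projAngle_le (v : ℝ × ℝ) (ρ : ℝ) :
    MeasurableSet {θ | |projAngle θ v| ≤ ρ} :=
  measurableSet_le (by unfold projAngle; fun_prop) measurable_const

theorem measurable_nearPairs {ι : Type*} [Fintype ι] (c : ι → ℝ × ℝ) (ρ : ℝ) :
    Measurable (nearPairs c ρ) :=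
  Finset.measurable_sum _ fun _ _ => measurable_one.indicator (measurableSet_abs_projAngle_le _ _)

theorem setLIntegral_nearPairs {ι : Type*} [Fintype ι] (c : ι → ℝ × ℝ) (ρ : ℝ) (s : Set ℝ) :
    ∫⁻ θ in s, nearPairs c ρ θ =
      ∑ p : ι × ι, volume ({θ | |projAngle θ (c p.1 - c p.2)| ≤ ρ} ∩ s) := by
  simp only [nearPairs]
  rw [lintegral_finsetSum _ fun _ _ =>
    measurable_one.indicator (measurableSet_abs_projAngle_le _ _)]
  refine Finset.sum_congr rfl fun p _ => ?_
  rw [lintegral_indicator_one (measurableSet_abs_projAngle_le _ _),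
    Measure.restrict_apply (measurableSet_abs_projAngle_le _ _)]

theorem sq_le_volume_projAngle_image_mul_nearPairs {ι : Type*} [Fintype ι] (c : ι → ℝ × ℝ)
    {d : ℝ} (hd : 0 ≤ d) (θ : ℝ) :
    ENNReal.ofReal (Fintype.card ι * d) ^ 2 ≤
      volume (projAngle θ '' ⋃ i, closedSquare (c i) d) *
        (ENNReal.ofReal (4 * d) * nearPairs c (4 * d) θ) := by
  set s : ι → Set ℝ := fun i => projAngle θ '' closedSquare (c i) d
  have hs : ∀ i, MeasurableSet (s i) := fun i =>
    ((isCompact_closedSquare _ _).image (continuous_projAngle θ)).isClosed.measurableSet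
  have hcard : ENNReal.ofReal (Fintype.card ι * d) ≤ ∑ i, volume (s i) := by
    rw [ENNReal.ofReal_mul (Nat.cast_nonneg _), ENNReal.ofReal_natCast, ← nsmul_eq_mul,
      ← Finset.card_univ, ← Finset.sum_const]
    exact Finset.sum_le_sum fun i _ => ofReal_le_volume_projAngle_image_closedSquare θ _ hd
  have hpair : ∀ i j, volume (s i ∩ s j) ≤ ENNReal.ofReal (4 * d) *
      {θ | |projAngle θ (c i - c j)| ≤ 4 * d}.indicator 1 θ := by
    intro i j
    have hi := projAngle_image_closedSquare_subset θ (c i) d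
    have hj := projAngle_image_closedSquare_subset θ (c j) d
    by_cases hij : |projAngle θ (c i - c j)| ≤ 4 * d
    · simp only [indicator, mem_ofPred_eq, hij, if_true, Pi.one_apply, mul_one]
      calc volume (s i ∩ s j)
          ≤ volume (Icc (projAngle θ (c i) - 2 * d) (projAngle θ (c i) + 2 * d)) :=
            measure_mono (inter_subset_left.trans hi)
        _ = ENNReal.ofReal (4 * d) := by rw [Real.volume_Icc]; ring_nf
    · have : s i ∩ s j = ∅ := by
        refine eq_empty_of_forall_notMem fun z ⟨hzi, hzj⟩ => hij ?_
        have := hi hzi; have := hj hzj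
        rw [projAngle_sub, abs_le]; simp only [mem_Icc] at *; constructor <;> linarith
      simp [s, this]
  rw [image_iUnion]
  calc ENNReal.ofReal (Fintype.card ι * d) ^ 2 ≤ (∑ i, volume (s i)) ^ 2 := by gcongr
    _ ≤ volume (⋃ i, s i) * ∑ i, ∑ j, volume (s i ∩ s j) := sq_sum_measure_le_measure_iUnion_mul hs
    _ ≤ _ := by
      gcongr
      rw [nearPairs, Finset.mul_sum, Fintype.sum_prod_type]
      exact Finset.sum_le_sum fun i _ => Finset.sum_le_sum fun j _ => hpair i j

end NearPairs

section Angles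

theorem lipschitzWith_one_arctan : LipschitzWith 1 arctan := by
  refine lipschitzWith_of_nnnorm_deriv_le differentiable_arctan fun x => ?_
  rw [← NNReal.coe_le_coe, coe_nnnorm, Real.deriv_arctan, Real.norm_eq_abs, NNReal.coe_one,
    abs_of_nonneg (by positivity), div_le_one (by positivity)]
  nlinarith [sq_nonneg x]

theorem abs_sub_le_abs_tan_sub {x y : ℝ} (hx : x ∈ Ioo (-(π / 2)) (π / 2))
    (hy : y ∈ Ioo (-(π / 2)) (π / 2)) : |x - y| ≤ |tan x - tan y| := by
  have := lipschitzWith_one_arctan.dist_le_mul (tan x) (tan y)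
  rwa [arctan_tan hx.1 hx.2, arctan_tan hy.1 hy.2, NNReal.coe_one, one_mul, Real.dist_eq,
    Real.dist_eq] at this

theorem volume_le_of_abs_add_tan_mul_le {B : Set ℝ} (hB : B ⊆ Ioo (-(π / 2)) (π / 2))
    {a b r : ℝ} (hb : b ≠ 0) (h : ∀ θ ∈ B, |a + tan θ * b| ≤ r) :
    volume B ≤ ENNReal.ofReal (2 * r / |b|) := by
  refine (Real.volume_le_diam B).trans <| Metric.ediam_le fun θ hθ θ' hθ' => ?_
  rw [edist_dist, Real.dist_eq]
  refine ENNReal.ofReal_le_ofReal <| (abs_sub_le_abs_tan_sub (hB hθ) (hB hθ')).trans ?_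
  rw [le_div_iff₀ (abs_pos.2 hb), ← abs_mul]
  calc |(tan θ - tan θ') * b| = |(a + tan θ * b) - (a + tan θ' * b)| := by ring_nf
    _ ≤ |a + tan θ * b| + |a + tan θ' * b| := abs_sub _ _
    _ ≤ 2 * r := by linarith [h θ hθ, h θ' hθ']

theorem mem_Ioo_of_mem_Ioc_zero_pi_div_four {θ : ℝ} (hθ : θ ∈ Ioc 0 (π / 4)) :
    θ ∈ Ioo (-(π / 2)) (π / 2) :=
  ⟨by linarith [hθ.1, pi_pos], by linarith [hθ.2, pi_pos]⟩

theorem tan_mem_Icc_of_mem_Ioc {θ : ℝ} (hθ : θ ∈ Ioc 0 (π / 4)) : tan θ ∈ Icc 0 1 :=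
  ⟨tan_nonneg_of_nonneg_of_le_pi_div_two hθ.1.le (by linarith [hθ.2, pi_pos]),
    tan_pi_div_four ▸ strictMonoOn_tan.monotoneOn (mem_Ioo_of_mem_Ioc_zero_pi_div_four hθ)
      (mem_Ioo_of_mem_Ioc_zero_pi_div_four ⟨by positivity, le_rfl⟩) hθ.2⟩

theorem abs_add_tan_mul_le {θ : ℝ} (hθ : θ ∈ Ioc 0 (π / 4)) (v : ℝ × ℝ) :
    |v.1 + tan θ * v.2| ≤ 2 * |projAngle θ v| := by
  have hcos : 1 / 2 ≤ cos θ := by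
    calc (1 : ℝ) / 2 ≤ √2 / 2 := by nlinarith [Real.sq_sqrt (zero_le_two (α := ℝ)), sqrt_nonneg 2]
      _ = cos (π / 4) := cos_pi_div_four.symm
      _ ≤ cos θ := cos_le_cos_of_nonneg_of_le_pi hθ.1.le (by linarith [pi_pos]) hθ.2
  have hcos0 : 0 < cos θ := by linarith
  have : v.1 + tan θ * v.2 = projAngle θ v / cos θ := by
    rw [tan_eq_sin_div_cos, projAngle]; field_simp
  rw [this, abs_div, abs_of_pos hcos0, div_le_iff₀ hcos0]
  nlinarith [abs_nonneg (projAngle θ v)]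

theorem volume_abs_projAngle_le_inter_le (v : ℝ × ℝ) (hv : v ≠ 0) (ρ : ℝ) :
    volume ({θ | |projAngle θ v| ≤ ρ} ∩ Ioc 0 (π / 4)) ≤ ENNReal.ofReal (16 * ρ / ‖v‖) := by
  set B := {θ | |projAngle θ v| ≤ ρ} ∩ Ioc 0 (π / 4)
  have hv0 : 0 < ‖v‖ := norm_pos_iff.2 hv
  have hlin : ∀ θ ∈ B, |v.1 + tan θ * v.2| ≤ 2 * ρ := fun θ hθ =>
    (abs_add_tan_mul_le hθ.2 v).trans (by linarith [hθ.1.out])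
  rcases B.eq_empty_or_nonempty with hB | ⟨θ₀, hθ₀⟩
  · simp [hB]
  have hρ : 0 ≤ ρ := (abs_nonneg _).trans hθ₀.1
  by_cases hv2 : ‖v‖ / 4 ≤ |v.2|
  · have hv2pos : 0 < |v.2| := by linarith
    calc volume B ≤ ENNReal.ofReal (2 * (2 * ρ) / |v.2|) :=
          volume_le_of_abs_add_tan_mul_le (fun θ hθ => mem_Ioo_of_mem_Ioc_zero_pi_div_four hθ.2)
            (abs_pos.1 hv2pos) hlin
      _ ≤ ENNReal.ofReal (16 * ρ / ‖v‖) := by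
        refine ENNReal.ofReal_le_ofReal ?_
        rw [div_le_div_iff₀ hv2pos hv0]
        nlinarith
  -- for nearly horizontal `v`, the set `B` can only be nonempty when `ρ` is comparable to `‖v‖`
  rw [not_le] at hv2
  have hv1 : ‖v‖ = |v.1| := by
    have h := Prod.norm_def v
    rw [Real.norm_eq_abs, Real.norm_eq_abs] at h
    rcases max_choice |v.1| |v.2| with h' | h' <;> rw [h'] at h
    · exact h
    · linarith
  have hρv : 3 * ‖v‖ / 4 ≤ 2 * ρ := by
    have ht := tan_mem_Icc_of_mem_Ioc hθ₀.2
    have : |tan θ₀ * v.2| ≤ |v.2| := by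
      rw [abs_mul, abs_of_nonneg ht.1]; nlinarith [abs_nonneg v.2, ht.2]
    have := abs_add_le (v.1 + tan θ₀ * v.2) (-(tan θ₀ * v.2))
    rw [abs_neg, add_neg_cancel_right] at this
    linarith [hlin θ₀ hθ₀]
  calc volume B ≤ volume (Ioc 0 (π / 4)) := measure_mono inter_subset_right
    _ = ENNReal.ofReal (π / 4) := by rw [Real.volume_Ioc, sub_zero]
    _ ≤ ENNReal.ofReal (16 * ρ / ‖v‖) := by
      refine ENNReal.ofReal_le_ofReal ?_
      rw [le_div_iff₀ hv0]
      nlinarith [pi_le_four]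

end Angles

section Words

open Finset

variable {α : Type*} [Fintype α] [DecidableEq α]

theorem card_filter_agree {n : ℕ} (w : Fin n → α) (k : ℕ) :
    #{w' : Fin n → α | ∀ j : Fin n, (j : ℕ) < k → w j = w' j} = Fintype.card α ^ (n - k) := by
  have : ({w' : Fin n → α | ∀ j : Fin n, (j : ℕ) < k → w j = w' j} : Finset (Fin n → α)) =
      Fintype.piFinset fun j : Fin n => if (j : ℕ) < k then {w j} else univ := by
    ext w'
    simp only [mem_filter, Finset.mem_univ, true_and, Fintype.mem_piFinset]
    refine forall_congr' fun j => ?_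
    split_ifs with h <;> simp [h, eq_comm]
  rw [this, Fintype.card_piFinset]
  simp only [apply_ite card, prod_ite, Finset.card_singleton, prod_const_one, card_univ,
    prod_const, one_mul]
  have := card_filter_add_card_filter_not (s := (univ : Finset (Fin n))) fun j => (j : ℕ) < k
  rw [Fin.card_filter_val_lt, card_univ, Fintype.card_fin] at this
  congr 1
  omega

theorem sum_ite_agree (n k : ℕ) (c : ℝ) :
    ∑ p : (Fin n → α) × (Fin n → α), (if ∀ j : Fin n, (j : ℕ) < k → p.1 j = p.2 j then c else 0) =
      Fintype.card α ^ n * Fintype.card α ^ (n - k) * c := by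
  rw [Fintype.sum_prod_type]
  simp only [← sum_filter, sum_const, card_filter_agree, nsmul_eq_mul, card_univ, Fintype.card_fun,
    Fintype.card_fin]
  push_cast; ring

end Words

section CantorSet

theorem dig_nonneg (b : Bool) : 0 ≤ dig b := by cases b <;> norm_num [dig]

theorem dig_le_three (b : Bool) : dig b ≤ 3 := by cases b <;> norm_num [dig]

theorem abs_dig_sub_dig_of_ne {b b' : Bool} (h : b ≠ b') : |dig b - dig b'| = 3 := by
  cases b <;> cases b' <;> simp_all [dig]

theorem cantorX_succ {n : ℕ} (a : Fin (n + 1) → Bool) :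
    cantorX a = dig (a 0) / 4 + cantorX (Fin.tail a) / 4 := by
  simp only [cantorX, Fin.sum_univ_succ, Fin.val_zero, Fin.val_succ, Fin.tail, Finset.sum_div]
  congr 1
  · norm_num [div_eq_mul_one_div]
  · refine Finset.sum_congr rfl fun j _ => ?_
    rw [show (-((j + 1 : ℕ) + 1 : ℤ)) = -((j : ℕ) + 1 : ℤ) - 1 by push_cast; ring,
      zpow_sub₀ (by norm_num), zpow_one, mul_div_assoc]

theorem cantorX_nonneg {n : ℕ} (a : Fin n → Bool) : 0 ≤ cantorX a :=
  Finset.sum_nonneg fun j _ => mul_nonneg (dig_nonneg _) (by positivity)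

theorem cantorX_add_le_one {n : ℕ} (a : Fin n → Bool) : cantorX a + (4 : ℝ) ^ (-(n : ℤ)) ≤ 1 := by
  induction n with
  | zero => simp [cantorX]
  | succ n ih =>
    have := ih (Fin.tail a)
    have := dig_le_three (a 0)
    rw [cantorX_succ, show (-((n + 1 : ℕ) : ℤ)) = -(n : ℤ) - 1 by push_cast; ring,
      zpow_sub₀ (by norm_num), zpow_one]
    linarith

theorem abs_cantorX_sub_ge {n : ℕ} {a a' : Fin n → Bool} (l : Fin n)
    (hagree : ∀ j < l, a j = a' j) (hne : a l ≠ a' l) :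
    2 / 4 ^ ((l : ℕ) + 1) ≤ |cantorX a - cantorX a'| := by
  induction n with
  | zero => exact l.elim0
  | succ n ih =>
    rw [cantorX_succ a, cantorX_succ a']
    cases l using Fin.cases with
    | zero =>
      have hdig := abs_dig_sub_dig_of_ne hne
      have h₁ := cantorX_add_le_one (Fin.tail a); have h₂ := cantorX_add_le_one (Fin.tail a')
      have h₃ := cantorX_nonneg (Fin.tail a); have h₄ := cantorX_nonneg (Fin.tail a')
      have : (0 : ℝ) ≤ (4 : ℝ) ^ (-(n : ℤ)) := by positivity
      rw [abs_eq (by norm_num : (0 : ℝ) ≤ 3)] at hdig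
      rw [le_abs, Fin.val_zero, zero_add, pow_one]
      rcases hdig with h | h <;> [left; right] <;> linarith
    | succ l =>
      have h0 : a 0 = a' 0 := hagree 0 (Fin.succ_pos l)
      have := ih (a := Fin.tail a) (a' := Fin.tail a') l
        (fun j hj => hagree j.succ (Fin.succ_lt_succ_iff.2 hj)) hne
      rw [h0, add_sub_add_left_eq_sub, ← sub_div, abs_div, abs_of_pos (by norm_num : (0 : ℝ) < 4),
        Fin.val_succ, pow_succ, ← div_div]
      gcongr

noncomputable def cantorCorner {n : ℕ} (w : Fin n → Bool × Bool) : ℝ × ℝ :=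
  (cantorX fun j => (w j).1, cantorX fun j => (w j).2)

theorem cantorK_eq_iUnion (n : ℕ) :
    cantorK n =
      ⋃ w : Fin n → Bool × Bool, closedSquare (cantorCorner w) ((4 : ℝ) ^ (-(n : ℤ))) := by
  ext p
  simp only [cantorK, cantorC, closedSquare, cantorCorner, mem_prod, mem_iUnion]
  constructor
  · rintro ⟨⟨a, ha⟩, b, hb⟩
    exact ⟨fun j => (a j, b j), ha, hb⟩
  · rintro ⟨w, hw⟩
    exact ⟨⟨_, hw.1⟩, _, hw.2⟩

theorem isCompact_cantorK (n : ℕ) : IsCompact (cantorK n) := by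
  rw [cantorK_eq_iUnion]
  exact isCompact_iUnion fun _ => isCompact_closedSquare _ _

theorem norm_cantorCorner_sub_ge {n : ℕ} {w w' : Fin n → Bool × Bool} (l : Fin n)
    (hagree : ∀ j < l, w j = w' j) (hne : w l ≠ w' l) :
    2 / 4 ^ ((l : ℕ) + 1) ≤ ‖cantorCorner w - cantorCorner w'‖ := by
  rw [Prod.norm_def, Real.norm_eq_abs, Real.norm_eq_abs]
  rcases not_and_or.1 (mt Prod.ext_iff.2 hne) with h | h
  · exact (abs_cantorX_sub_ge l (fun j hj => congrArg Prod.fst (hagree j hj)) h).trans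
      (le_max_left _ _)
  · exact (abs_cantorX_sub_ge l (fun j hj => congrArg Prod.snd (hagree j hj)) h).trans
      (le_max_right _ _)

/-- The witness `k` is the first level at which the addresses `w` and `w'` differ, or `n`. -/
theorem exists_volume_nearAngles_cantorCorner_le {n : ℕ} (w w' : Fin n → Bool × Bool) :
    ∃ k ≤ n, (∀ j : Fin n, (j : ℕ) < k → w j = w' j) ∧
      volume ({θ | |projAngle θ (cantorCorner w - cantorCorner w')| ≤ 4 * (4 : ℝ) ^ (-(n : ℤ))} ∩
        Ioc 0 (π / 4)) ≤ ENNReal.ofReal (128 * 4 ^ k / 4 ^ n) := by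
  have h4n : (0 : ℝ) < 4 ^ n := by positivity
  by_cases hw : w = w'
  · refine ⟨n, le_rfl, fun j _ => congrFun hw j, ?_⟩
    calc _ ≤ volume (Ioc 0 (π / 4)) := measure_mono inter_subset_right
      _ = ENNReal.ofReal (π / 4) := by rw [Real.volume_Ioc, sub_zero]
      _ ≤ _ := by
        rw [mul_div_assoc, div_self h4n.ne']
        exact ENNReal.ofReal_le_ofReal (by linarith [pi_le_four])
  obtain ⟨l, hl, hmin⟩ := wellFounded_lt.has_min {l | w l ≠ w' l} (Function.ne_iff.1 hw)
  have hagree : ∀ j < l, w j = w' j := fun j hj => not_not.1 fun h => hmin j h hj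
  have hgap := norm_cantorCorner_sub_ge l hagree hl
  refine ⟨l, l.isLt.le, fun j hj => hagree j hj, ?_⟩
  refine (volume_abs_projAngle_le_inter_le _ (norm_pos_iff.1 (lt_of_lt_of_le (by positivity) hgap))
    _).trans (ENNReal.ofReal_le_ofReal ?_)
  rw [zpow_neg, zpow_natCast, div_le_div_iff₀ (lt_of_lt_of_le (by positivity) hgap) h4n]
  calc 16 * (4 * (4 ^ n)⁻¹) * 4 ^ n = 32 * 4 ^ ((l : ℕ) + 1) * (2 / 4 ^ ((l : ℕ) + 1)) := by
        field_simp; ring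
    _ ≤ 32 * 4 ^ ((l : ℕ) + 1) * ‖cantorCorner w - cantorCorner w'‖ := by gcongr
    _ = _ := by ring

theorem setLIntegral_nearPairs_cantorCorner_le (n : ℕ) :
    ∫⁻ θ in Ioc 0 (π / 4), nearPairs (cantorCorner (n := n)) (4 * (4 : ℝ) ^ (-(n : ℤ))) θ ≤
      ENNReal.ofReal (128 * (n + 1) * 4 ^ n) := by
  -- Bounding each pair by its terms at all levels `k` below which it agrees, instead of only at
  -- its first difference, reduces the count to the `4^n · 4^(n-k)` pairs agreeing below `k`.
  set t : ℕ → (Fin n → Bool × Bool) × (Fin n → Bool × Bool) → ℝ := fun k p =>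
    if ∀ j : Fin n, (j : ℕ) < k → p.1 j = p.2 j then 128 * 4 ^ k / 4 ^ n else 0
  have ht : ∀ k p, 0 ≤ t k p := fun k p => by simp only [t]; split_ifs <;> positivity
  have hle : ∀ p, volume ({θ | |projAngle θ (cantorCorner p.1 - cantorCorner p.2)| ≤
      4 * (4 : ℝ) ^ (-(n : ℤ))} ∩ Ioc 0 (π / 4)) ≤
        ENNReal.ofReal (∑ k ∈ Finset.range (n + 1), t k p) := by
    intro p
    obtain ⟨k, hk, hagree, hvol⟩ := exists_volume_nearAngles_cantorCorner_le p.1 p.2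
    refine hvol.trans (ENNReal.ofReal_le_ofReal ?_)
    calc 128 * 4 ^ k / 4 ^ n = t k p := by simp only [t, if_pos hagree]
      _ ≤ _ := Finset.single_le_sum (fun k _ => ht k p) (Finset.mem_range.2 (Nat.lt_succ_of_le hk))
  have hcount : ∀ k ≤ n, ∑ p, t k p = 128 * 4 ^ n := by
    intro k hk
    simp only [t, sum_ite_agree, Fintype.card_prod, Fintype.card_bool]
    push_cast
    calc _ = 128 * (4 ^ (n - k) * 4 ^ k) * (4 ^ n / 4 ^ n : ℝ) := by ring
      _ = _ := by rw [← pow_add, Nat.sub_add_cancel hk, div_self (by positivity), mul_one]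
  calc _ = ∑ p : (Fin n → Bool × Bool) × (Fin n → Bool × Bool),
        volume ({θ | |projAngle θ (cantorCorner p.1 - cantorCorner p.2)| ≤
          4 * (4 : ℝ) ^ (-(n : ℤ))} ∩ Ioc 0 (π / 4)) := setLIntegral_nearPairs _ _ _
    _ ≤ ∑ p, ENNReal.ofReal (∑ k ∈ Finset.range (n + 1), t k p) :=
        Finset.sum_le_sum fun p _ => hle p
    _ = ENNReal.ofReal (∑ k ∈ Finset.range (n + 1), ∑ p, t k p) := by
        rw [← ENNReal.ofReal_sum_of_nonneg fun p _ => Finset.sum_nonneg fun k _ => ht k p,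
          Finset.sum_comm]
    _ = ENNReal.ofReal (128 * (n + 1) * 4 ^ n) := by
        rw [Finset.sum_congr rfl fun k hk => hcount k (Nat.lt_succ_iff.1 (Finset.mem_range.1 hk)),
          Finset.sum_const, Finset.card_range, nsmul_eq_mul]
        push_cast; ring_nf

theorem ofReal_le_setLIntegral_volume_projAngle_cantorK {n : ℕ} (hn : 1 ≤ n) :
    ENNReal.ofReal (π ^ 2 / (16384 * n)) ≤
      ∫⁻ θ in Ioc 0 (π / 4), volume (projAngle θ '' cantorK n) := by
  set D : ℝ := (4 : ℝ) ^ (-(n : ℤ)) with hDdef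
  have hD : (4 : ℝ) ^ n * D = 1 := by simp [D]
  have hD0 : 0 ≤ D := by positivity
  have hPN : ∀ θ, 1 ≤ volume (projAngle θ '' cantorK n) *
      (ENNReal.ofReal (4 * D) * nearPairs (cantorCorner (n := n)) (4 * D) θ) := by
    intro θ
    have := sq_le_volume_projAngle_image_mul_nearPairs (cantorCorner (n := n)) hD0 θ
    rw [cantorK_eq_iUnion, ← hDdef]
    simpa [hD] using this
  have hCS := mul_measure_univ_sq_le_lintegral_mul_lintegral (μ := volume.restrict (Ioc 0 (π / 4)))
    (measurable_volume_projAngle_image (isCompact_cantorK n)).aemeasurable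
    ((measurable_nearPairs _ _).const_mul _).aemeasurable hPN
  rw [one_mul, Measure.restrict_apply_univ, Real.volume_Ioc, sub_zero] at hCS
  have hN : ∫⁻ θ in Ioc 0 (π / 4), ENNReal.ofReal (4 * D) *
      nearPairs (cantorCorner (n := n)) (4 * D) θ ≤ ENNReal.ofReal (1024 * n) := by
    rw [lintegral_const_mul _ (measurable_nearPairs _ _)]
    calc _ ≤ ENNReal.ofReal (4 * D) * ENNReal.ofReal (128 * (n + 1) * 4 ^ n) := by
          gcongr; exact setLIntegral_nearPairs_cantorCorner_le n
      _ = ENNReal.ofReal (512 * (n + 1)) := by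
          rw [← ENNReal.ofReal_mul (by positivity)]
          congr 1
          linear_combination (512 * (n + 1) : ℝ) * hD
      _ ≤ _ := ENNReal.ofReal_le_ofReal (by
          have : (1 : ℝ) ≤ n := by exact_mod_cast hn
          linarith)
  have hn0 : (0 : ℝ) < 1024 * n := by positivity
  rw [show π ^ 2 / (16384 * n) = (π / 4) ^ 2 / (1024 * n) by ring,
    ENNReal.ofReal_div_of_pos hn0, ENNReal.ofReal_pow (by positivity)]
  exact ENNReal.div_le_of_le_mul (hCS.trans (mul_le_mul_right hN _))

end CantorSet

/-- There exists `c > 0` such that for all `n ≥ 1`, `Fav(K_n) ≥ c / n`. -/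
theorem favard_cantorK_ge_inv : ∃ c : ℝ, 0 < c ∧ ∀ n : ℕ, 1 ≤ n →
    favard (cantorK n) ≥ c / n := by
  refine ⟨π / 16384, by positivity, fun n hn => ?_⟩
  calc π / 16384 / n = π ^ 2 / (16384 * n) / π := by field_simp
    _ ≤ favard (cantorK n) := div_pi_le_favard (isCompact_cantorK n) <|
      (ofReal_le_setLIntegral_volume_projAngle_cantorK hn).trans <|
        lintegral_mono_set (Ioc_subset_Ioc_right (by linarith [pi_pos]))
end

section
/- There exists a universal constant C > 0 with the following property: for any two closed axis-parallel squares Q and Q' in ℝ² of equal side length δ > 0 whose centers are at Euclidean distance d ≥ δ, one has ∫₀^π |proj_θ(Q) ∩ proj_θ(Q')| dθ ≤ C · δ²/d. -/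
/-!
A projection of a square of side `δ` lies within `δ` of the projection of its centre, so the
projections of the two squares meet in an interval of length at most
`max (2δ - |proj_θ p - proj_θ q|) 0 = max (2δ - d |cos (θ - φ)|) 0`, with `φ` the polar angle of
`p - q`. Shifting by `φ` using periodicity turns this into `max (2δ - d |sin s|) 0` on
`[-π/2, π/2]`; by Jordan's inequality `|sin s| ≥ 2|s|/π` it vanishes for `|s| > πδ/d` and is at
most `2δ`, so the integral is at most `4πδ²/d`.
-/

open MeasureTheory Real Set

noncomputable section

/-- Euclidean distance on `ℝ × ℝ`. -/
def euclDist (p q : ℝ × ℝ) : ℝ := Real.sqrt ((p.1 - q.1) ^ 2 + (p.2 - q.2) ^ 2)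

/-- The closed axis-parallel square with center `p` and side length `δ`. -/
def squareAt (p : ℝ × ℝ) (δ : ℝ) : Set (ℝ × ℝ) :=
  Icc (p.1 - δ / 2) (p.1 + δ / 2) ×ˢ Icc (p.2 - δ / 2) (p.2 + δ / 2)

end

lemma projAngle_sub_projAngle (θ : ℝ) (x r : ℝ × ℝ) :
    projAngle θ x - projAngle θ r = (x.1 - r.1) * cos θ + (x.2 - r.2) * sin θ := by
  simp only [projAngle]; ring

lemma abs_projAngle_sub_le_of_mem_squareAt {θ δ : ℝ} {x r : ℝ × ℝ} (hx : x ∈ squareAt r δ) :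
    |projAngle θ x - projAngle θ r| ≤ δ := by
  obtain ⟨⟨hx₁, hx₁'⟩, ⟨hx₂, hx₂'⟩⟩ := hx
  have hδ : 0 ≤ δ / 2 := by linarith
  have h₁ : |x.1 - r.1| ≤ δ / 2 := abs_le.2 ⟨by linarith, by linarith⟩
  have h₂ : |x.2 - r.2| ≤ δ / 2 := abs_le.2 ⟨by linarith, by linarith⟩
  calc |projAngle θ x - projAngle θ r|
      ≤ |x.1 - r.1| * |cos θ| + |x.2 - r.2| * |sin θ| := by
        rw [projAngle_sub_projAngle, ← abs_mul, ← abs_mul]; exact abs_add_le _ _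
    _ ≤ δ / 2 * 1 + δ / 2 * 1 :=
        add_le_add (mul_le_mul h₁ (abs_cos_le_one θ) (abs_nonneg _) hδ)
          (mul_le_mul h₂ (abs_sin_le_one θ) (abs_nonneg _) hδ)
    _ = δ := by ring

lemma projAngle_image_squareAt_subset (θ δ : ℝ) (r : ℝ × ℝ) :
    projAngle θ '' squareAt r δ ⊆ Icc (projAngle θ r - δ) (projAngle θ r + δ) := by
  rintro _ ⟨x, hx, rfl⟩
  have h := abs_le.1 (abs_projAngle_sub_le_of_mem_squareAt (θ := θ) hx)
  exact ⟨by linarith [h.1], by linarith [h.2]⟩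

lemma volume_real_Icc_inter_Icc (a b δ : ℝ) :
    volume.real (Icc (a - δ) (a + δ) ∩ Icc (b - δ) (b + δ)) = max (2 * δ - |a - b|) 0 := by
  rw [Icc_inter_Icc, Real.volume_real_Icc, min_add_add_right, max_sub_sub_right,
    ← max_sub_min_eq_abs']
  ring_nf

lemma volume_real_projAngle_image_inter_le (θ δ : ℝ) (p q : ℝ × ℝ) :
    volume.real (projAngle θ '' squareAt p δ ∩ projAngle θ '' squareAt q δ) ≤
      max (2 * δ - |projAngle θ p - projAngle θ q|) 0 := by
  rw [← volume_real_Icc_inter_Icc]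
  exact measureReal_mono (inter_subset_inter (projAngle_image_squareAt_subset θ δ p)
    (projAngle_image_squareAt_subset θ δ q))
    (measure_mono inter_subset_left |>.trans_lt measure_Icc_lt_top).ne

lemma exists_projAngle_sub_projAngle_eq_mul_cos (p q : ℝ × ℝ) :
    ∃ φ : ℝ, ∀ θ, projAngle θ p - projAngle θ q = euclDist p q * cos (θ - φ) := by
  set z : ℂ := ⟨p.1 - q.1, p.2 - q.2⟩
  have hz : ‖z‖ = euclDist p q := by
    rw [Complex.norm_def, Complex.normSq_mk, euclDist]; ring_nf
  refine ⟨z.arg, fun θ => ?_⟩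
  have hre : ‖z‖ * cos z.arg = p.1 - q.1 := Complex.norm_mul_cos_arg z
  have him : ‖z‖ * sin z.arg = p.2 - q.2 := Complex.norm_mul_sin_arg z
  rw [← hz, cos_sub, projAngle_sub_projAngle, ← hre, ← him]
  ring

lemma integral_max_sub_mul_abs_sin_le {A B : ℝ} (hA : 0 ≤ A) (hB : 0 < B) :
    ∫ s in -(π / 2)..π / 2, max (A - B * |sin s|) 0 ≤ π * A ^ 2 / B := by
  set r := π * A / (2 * B)
  have hr : 0 ≤ r := by positivity
  set I := Ioc (-(π / 2)) (π / 2)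
  have hvanish : ∀ s ∈ I \ (I ∩ Icc (-r) r), max (A - B * |sin s|) 0 = 0 := by
    rintro s ⟨⟨hs₁, hs₂⟩, hsr⟩
    have hrs : r < |s| := by
      by_contra! h
      exact hsr ⟨⟨hs₁, hs₂⟩, abs_le.1 h⟩
    have hjordan := mul_abs_le_abs_sin (abs_le.2 ⟨hs₁.le, hs₂⟩)
    have hA_eq : A = B * (2 / π * r) := by simp only [r]; field_simp
    refine max_eq_right (sub_nonpos.2 ?_)
    rw [hA_eq]
    gcongr
    exact (mul_le_mul_of_nonneg_left hrs.le (by positivity)).trans hjordan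
  rw [intervalIntegral.integral_of_le (by linarith [pi_pos]),
    setIntegral_eq_of_subset_of_forall_sdiff_eq_zero measurableSet_Ioc inter_subset_left hvanish]
  calc ∫ s in I ∩ Icc (-r) r, max (A - B * |sin s|) 0
      ≤ A * volume.real (I ∩ Icc (-r) r) := by
        refine (Real.le_norm_self _).trans (norm_setIntegral_le_of_norm_le_const
          (measure_mono inter_subset_right |>.trans_lt measure_Icc_lt_top) fun s _ => ?_)
        rw [Real.norm_of_nonneg (le_max_right _ _)]
        exact max_le (by linarith [mul_nonneg hB.le (abs_nonneg (sin s))]) hA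
    _ ≤ A * volume.real (Icc (-r) r) :=
        mul_le_mul_of_nonneg_left (measureReal_mono inter_subset_right measure_Icc_lt_top.ne) hA
    _ = π * A ^ 2 / B := by
        rw [Real.volume_real_Icc_of_le (by linarith)]; simp only [r]; field_simp; ring

lemma integral_max_sub_mul_abs_cos_le {A B : ℝ} (hA : 0 ≤ A) (hB : 0 < B) (φ : ℝ) :
    ∫ θ in (0 : ℝ)..π, max (A - B * |cos (θ - φ)|) 0 ≤ π * A ^ 2 / B := by
  set g := fun θ => max (A - B * |cos (θ - φ)|) 0
  have hper : Function.Periodic g π := by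
    intro θ
    simp only [g, add_sub_right_comm θ π φ, cos_add_pi, abs_neg]
  calc ∫ θ in (0 : ℝ)..π, g θ = ∫ θ in (φ - π)..(φ - π) + π, g θ := by
        simpa using hper.intervalIntegral_add_eq 0 (φ - π)
    _ = ∫ s in -(π / 2)..π / 2, g (s + (φ - π / 2)) := by
        rw [intervalIntegral.integral_comp_add_right]; congr 1 <;> ring
    _ = ∫ s in -(π / 2)..π / 2, max (A - B * |sin s|) 0 := by
        refine intervalIntegral.integral_congr fun s _ => ?_
        simp only [g, show s + (φ - π / 2) - φ = s - π / 2 by ring, cos_sub_pi_div_two]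
    _ ≤ π * A ^ 2 / B := integral_max_sub_mul_abs_sin_le hA hB

/-- There is a universal `C > 0` such that for any two closed axis-parallel squares of
equal side length `δ > 0` whose centers are at Euclidean distance `d ≥ δ`,
`∫₀^π |proj_θ(Q) ∩ proj_θ(Q')| dθ ≤ C · δ² / d`. -/
theorem integral_projection_intersection_squares_le :
    ∃ C : ℝ, 0 < C ∧ ∀ (δ d : ℝ) (p q : ℝ × ℝ), 0 < δ → δ ≤ d → euclDist p q = d →
      (∫ θ in (0 : ℝ)..π,
        (volume (projAngle θ '' squareAt p δ ∩ projAngle θ '' squareAt q δ)).toReal) ≤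
        C * δ ^ 2 / d := by
  refine ⟨4 * π, by positivity, fun δ d p q hδ hδd hpq => ?_⟩
  have hd : 0 < d := hδ.trans_le hδd
  obtain ⟨φ, hφ⟩ := exists_projAngle_sub_projAngle_eq_mul_cos p q
  have hbound : ∀ θ, (volume (projAngle θ '' squareAt p δ ∩ projAngle θ '' squareAt q δ)).toReal
      ≤ max (2 * δ - d * |cos (θ - φ)|) 0 := fun θ => by
    simpa only [hφ, hpq, abs_mul, abs_of_pos hd, measureReal_def] using
      volume_real_projAngle_image_inter_le θ δ p q
  calc _ ≤ ∫ θ in (0 : ℝ)..π, max (2 * δ - d * |cos (θ - φ)|) 0 := by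
        rw [intervalIntegral.integral_of_le pi_pos.le, intervalIntegral.integral_of_le pi_pos.le]
        exact integral_mono_of_nonneg (ae_of_all _ fun θ => ENNReal.toReal_nonneg)
          (by fun_prop : Continuous _).integrableOn_Ioc (ae_of_all _ hbound)
    _ ≤ π * (2 * δ) ^ 2 / d := integral_max_sub_mul_abs_cos_le (by positivity) hd φ
    _ = 4 * π * δ ^ 2 / d := by ring
end

section
/- There exists a constant C > 0 such that for every natural number n ≥ 1, the Riesz 1-energy of the normalized measure μ_n on K_n satisfies ∫∫ 1/|z − ζ| dμ_n(z) dμ_n(ζ) ≤ C·n; equivalently, 16^n ∫_{K_n} ∫_{K_n} |z − ζ|^{-1} dz dζ ≤ C·n, where the integrals are with respect to two-dimensional Lebesgue measure. -/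
open MeasureTheory Real Set

/-!
`C_{n+1}` is the union of the images of `C_n` under the homotheties of ratio `1/4` centred at
`0` and `1`, and an interval of length at most `1/4` meets only one of the two images. Hence
`|C_{k+m} ∩ I| ≤ 4^{-k} 2^{-m}` for every interval `I` of length `4^{-k}`, and `K_n` meets a ball
of radius `4^{-k}`, `k ≤ n`, in measure at most `4 · 4^{-k} · 4^{-n}`. In the layer-cake bound
`|z - ζ|⁻¹ ≤ 1 + ∑_k 4^{k+1} 1_{B(ζ, 4^{-k})}(z)` each scale `k ≤ n` then contributes
`16 · 4^{-n}` to `∫_{K_n} |z - ζ|⁻¹ dz`, and the scales `k > n`, estimated by the area of the ball,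
contribute a geometric series of the same size.
-/

open scoped ENNReal
open Metric

lemma four_zpow_neg_succ (n : ℕ) :
    (4 : ℝ) ^ (-((n + 1 : ℕ) : ℤ)) = 4⁻¹ * 4 ^ (-(n : ℤ)) := by
  rw [Nat.cast_succ, neg_add, zpow_add₀ (by norm_num), zpow_neg_one, mul_comm]

lemma ofReal_four_zpow_neg (k : ℕ) : ENNReal.ofReal ((4 : ℝ) ^ (-(k : ℤ))) = 4⁻¹ ^ k := by
  rw [zpow_neg, zpow_natCast, ENNReal.ofReal_inv_of_pos (by positivity),
    ENNReal.ofReal_pow (by norm_num), ENNReal.ofReal_ofNat, ENNReal.inv_pow]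

lemma inv_four_eq_inv_two_mul_inv_two : (4 : ℝ≥0∞)⁻¹ = 2⁻¹ * 2⁻¹ := by
  rw [← ENNReal.mul_inv (by norm_num) (by norm_num)]; norm_num

lemma four_pow_mul_inv_four_pow (k : ℕ) : (4 : ℝ≥0∞) ^ k * 4⁻¹ ^ k = 1 := by
  rw [← mul_pow, ENNReal.mul_inv_cancel (by norm_num) (by norm_num), one_pow]

lemma tsum_inv_four_pow_succ_le_one : ∑' j : ℕ, (4 : ℝ≥0∞)⁻¹ ^ (j + 1) ≤ 1 := by
  rw [ENNReal.tsum_geometric_add_one, ← div_eq_mul_inv]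
  refine ENNReal.div_le_of_le_mul ?_
  rw [one_mul]
  refine ENNReal.le_sub_of_add_le_left (ENNReal.inv_ne_top.2 four_ne_zero) ?_
  rw [← two_mul, ← div_eq_mul_inv]
  exact ENNReal.div_le_of_le_mul (by norm_num)

section InverseDistance

variable {X : Type*} [PseudoMetricSpace X]

/-- At `x = y` the left-hand side is the junk value `ofReal 0⁻¹ = 0`. -/
lemma ofReal_inv_dist_le_tsum_indicator (x y : X) :
    ENNReal.ofReal (dist x y)⁻¹ ≤ 1 + ∑' k : ℕ,
      (closedBall y ((4 : ℝ) ^ (-(k : ℤ)))).indicator (fun _ => (4 : ℝ≥0∞) ^ (k + 1)) x := by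
  rcases lt_or_ge (dist x y)⁻¹ 1 with hlt | hge
  · exact (ENNReal.ofReal_le_one.2 hlt.le).trans le_self_add
  obtain ⟨k, hk, hk'⟩ := exists_nat_pow_near hge (by norm_num : (1 : ℝ) < 4)
  have hd : 0 < dist x y := inv_pos.1 (one_pos.trans_le hge)
  have hmem : x ∈ closedBall y ((4 : ℝ) ^ (-(k : ℤ))) := by
    rw [mem_closedBall, zpow_neg, zpow_natCast]
    exact (le_inv_comm₀ (by positivity) hd).1 hk
  calc ENNReal.ofReal (dist x y)⁻¹ ≤ 4 ^ (k + 1) := by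
        rw [← ENNReal.ofReal_ofNat, ← ENNReal.ofReal_pow (by norm_num)]
        exact ENNReal.ofReal_le_ofReal hk'.le
    _ = (closedBall y ((4 : ℝ) ^ (-(k : ℤ)))).indicator (fun _ => 4 ^ (k + 1)) x :=
        (indicator_of_mem hmem fun _ => (4 : ℝ≥0∞) ^ (k + 1)).symm
    _ ≤ _ := ENNReal.le_tsum k
    _ ≤ _ := le_add_self

lemma lintegral_ofReal_inv_dist_le [MeasurableSpace X] [OpensMeasurableSpace X]
    (μ : Measure X) (y : X) :
    ∫⁻ x, ENNReal.ofReal (dist x y)⁻¹ ∂μ ≤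
      μ univ + ∑' k : ℕ, 4 ^ (k + 1) * μ (closedBall y ((4 : ℝ) ^ (-(k : ℤ)))) := by
  calc _ ≤ ∫⁻ x, 1 + ∑' k : ℕ, (closedBall y ((4 : ℝ) ^ (-(k : ℤ)))).indicator
          (fun _ => (4 : ℝ≥0∞) ^ (k + 1)) x ∂μ :=
        lintegral_mono fun x => ofReal_inv_dist_le_tsum_indicator x y
    _ = _ := by
        rw [lintegral_add_left measurable_const, lintegral_const, one_mul, lintegral_tsum
          fun k => (measurable_const.indicator measurableSet_closedBall).aemeasurable]
        simp_rw [lintegral_indicator_const measurableSet_closedBall]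

end InverseDistance

lemma dig_false : dig false = 0 := rfl

lemma dig_true : dig true = 3 := rfl

noncomputable def cantorMap (b : Bool) : ℝ →ᵃ[ℝ] ℝ := AffineMap.homothety (dig b / 3) (4⁻¹ : ℝ)

lemma cantorMap_apply (b : Bool) (x : ℝ) : cantorMap b x = (dig b + x) / 4 := by
  simp only [cantorMap, AffineMap.homothety_apply, vsub_eq_sub, vadd_eq_add, smul_eq_mul]
  ring

lemma volume_cantorMap_image (b : Bool) (s : Set ℝ) :
    volume (cantorMap b '' s) = 4⁻¹ * volume s := by
  rw [cantorMap, Measure.addHaar_image_homothety, Module.finrank_self, pow_one,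
    abs_of_pos (by norm_num), ENNReal.ofReal_inv_of_pos (by norm_num), ENNReal.ofReal_ofNat]

lemma cantorX_cons {n : ℕ} (b : Bool) (a : Fin n → Bool) :
    cantorX (Fin.cons b a : Fin (n + 1) → Bool) = cantorMap b (cantorX a) := by
  rw [cantorMap_apply, cantorX, cantorX, Fin.sum_univ_succ, Fin.cons_zero, add_div,
    Finset.sum_div]
  congr 1
  · norm_num [div_eq_mul_inv]
  · refine Finset.sum_congr rfl fun j _ => ?_
    rw [Fin.cons_succ, Fin.val_succ, mul_div_assoc]
    congr 1
    rw [div_eq_mul_inv, ← zpow_neg_one, ← zpow_add₀ (by norm_num)]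
    push_cast
    ring_nf

lemma cantorMap_image_Icc (b : Bool) (x : ℝ) (n : ℕ) :
    cantorMap b '' Icc x (x + (4 : ℝ) ^ (-(n : ℤ))) =
      Icc (cantorMap b x) (cantorMap b x + (4 : ℝ) ^ (-((n + 1 : ℕ) : ℤ))) := by
  have h : ⇑(cantorMap b) = fun y => 4⁻¹ * y + dig b / 4 := by
    ext y; rw [cantorMap_apply]; ring
  rw [h, image_affine_Icc' (by norm_num), four_zpow_neg_succ]
  congr 1
  ring

lemma cantorC_succ (n : ℕ) : cantorC (n + 1) = ⋃ b, cantorMap b '' cantorC n := by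
  simp only [cantorC, image_iUnion, cantorMap_image_Icc]
  ext x
  simp only [mem_iUnion]
  constructor
  · rintro ⟨a, hx⟩
    refine ⟨a 0, Fin.tail a, ?_⟩
    rwa [← cantorX_cons, Fin.cons_self_tail]
  · rintro ⟨b, a, hx⟩
    exact ⟨Fin.cons b a, by rwa [cantorX_cons]⟩

lemma cantorC_zero : cantorC 0 = Icc 0 1 := by
  simp [cantorC, cantorX, iUnion_const]

lemma cantorC_subset_Icc (n : ℕ) : cantorC n ⊆ Icc 0 1 := by
  induction n with
  | zero => rw [cantorC_zero]
  | succ n ih =>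
    rw [cantorC_succ]
    refine iUnion_subset fun b => ?_
    rintro _ ⟨u, hu, rfl⟩
    obtain ⟨hu0, hu1⟩ := ih hu
    rw [cantorMap_apply]
    cases b <;> simp only [dig_false, dig_true] <;> constructor <;> linarith

lemma exists_cantorC_succ_inter_Icc_subset (n : ℕ) (y : ℝ) {L : ℝ} (hL : L ≤ 4⁻¹) :
    ∃ b, cantorC (n + 1) ∩ Icc y (y + L) ⊆
      cantorMap b '' (cantorC n ∩ Icc (4 * y - dig b) (4 * y - dig b + 4 * L)) := by
  -- the two images lie in `[0, 1/4]` and `[3/4, 1]`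
  refine ⟨decide (1 / 2 ≤ y), ?_⟩
  rintro x ⟨hx, hxy⟩
  rw [cantorC_succ, mem_iUnion] at hx
  obtain ⟨c, u, hu, rfl⟩ := hx
  obtain ⟨hu0, hu1⟩ := cantorC_subset_Icc n hu
  rw [mem_Icc, cantorMap_apply] at hxy
  obtain ⟨hyx, hxyL⟩ := hxy
  have hc : c = decide (1 / 2 ≤ y) := by
    cases c <;> simp only [dig_false, dig_true] at hyx hxyL <;>
      simp only [Bool.false_eq, Bool.true_eq, decide_eq_false_iff_not, decide_eq_true_iff,
        not_le] <;> linarith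
  subst hc
  exact ⟨u, ⟨hu, by constructor <;> linarith⟩, rfl⟩

lemma volume_cantorC_le (n : ℕ) : volume (cantorC n) ≤ 2⁻¹ ^ n := by
  induction n with
  | zero => simp [cantorC_zero]
  | succ n ih =>
    calc volume (cantorC (n + 1))
        ≤ ∑ b, volume (cantorMap b '' cantorC n) := by
          rw [cantorC_succ]; exact measure_iUnion_fintype_le _ _
      _ = 2 * 4⁻¹ * volume (cantorC n) := by
          simp only [volume_cantorMap_image, Fintype.sum_bool]; ring
      _ ≤ 2⁻¹ ^ (n + 1) := by
          rw [pow_succ', inv_four_eq_inv_two_mul_inv_two, ← mul_assoc,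
            ENNReal.mul_inv_cancel (by norm_num) (by norm_num), one_mul]
          gcongr

lemma volume_cantorC_inter_Icc_le (k m : ℕ) (y : ℝ) :
    volume (cantorC (k + m) ∩ Icc y (y + (4 : ℝ) ^ (-(k : ℤ)))) ≤ 4⁻¹ ^ k * 2⁻¹ ^ m := by
  induction k generalizing y with
  | zero => simpa using (measure_mono inter_subset_left).trans (volume_cantorC_le m)
  | succ k ih =>
    have hL : (4 : ℝ) ^ (-((k + 1 : ℕ) : ℤ)) ≤ 4⁻¹ := by
      rw [four_zpow_neg_succ]
      exact mul_le_of_le_one_right (by norm_num) (zpow_le_one_of_nonpos₀ (by norm_num) (by omega))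
    obtain ⟨b, hb⟩ := exists_cantorC_succ_inter_Icc_subset (k + m) y hL
    have h4 : 4 * (4 : ℝ) ^ (-((k + 1 : ℕ) : ℤ)) = 4 ^ (-(k : ℤ)) := by
      rw [four_zpow_neg_succ, mul_inv_cancel_left₀ (by norm_num)]
    rw [Nat.add_right_comm]
    calc _ ≤ _ := measure_mono hb
      _ = 4⁻¹ * volume
            (cantorC (k + m) ∩ Icc (4 * y - dig b) (4 * y - dig b + 4 ^ (-(k : ℤ)))) := by
          rw [volume_cantorMap_image, h4]
      _ ≤ 4⁻¹ * (4⁻¹ ^ k * 2⁻¹ ^ m) := by gcongr; exact ih _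
      _ = 4⁻¹ ^ (k + 1) * 2⁻¹ ^ m := by ring

lemma volume_cantorC_inter_closedBall_le (k m : ℕ) (x : ℝ) :
    volume (cantorC (k + m) ∩ closedBall x ((4 : ℝ) ^ (-(k : ℤ)))) ≤
      2 * (4⁻¹ ^ k * 2⁻¹ ^ m) := by
  set r := (4 : ℝ) ^ (-(k : ℤ))
  have hr : 0 ≤ r := by positivity
  have hball : closedBall x r = Icc (x - r) (x - r + r) ∪ Icc x (x + r) := by
    rw [Real.closedBall_eq_Icc, sub_add_cancel,
      Icc_union_Icc_eq_Icc (by linarith) (by linarith)]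
  rw [hball, inter_union_distrib_left, two_mul]
  exact (measure_union_le _ _).trans
    (add_le_add (volume_cantorC_inter_Icc_le k m _) (volume_cantorC_inter_Icc_le k m _))

lemma volume_cantorK_le (n : ℕ) : volume (cantorK n) ≤ 4⁻¹ ^ n := by
  calc volume (cantorK n) = volume (cantorC n) * volume (cantorC n) := by
        rw [cantorK, Measure.volume_eq_prod, Measure.prod_prod]
    _ ≤ 2⁻¹ ^ n * 2⁻¹ ^ n := mul_le_mul' (volume_cantorC_le n) (volume_cantorC_le n)
    _ = 4⁻¹ ^ n := by rw [← mul_pow, inv_four_eq_inv_two_mul_inv_two]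

lemma volume_cantorK_inter_closedBall_le {k n : ℕ} (hk : k ≤ n) (z : ℝ × ℝ) :
    volume (cantorK n ∩ closedBall z ((4 : ℝ) ^ (-(k : ℤ)))) ≤
      4 * 4⁻¹ ^ k * 4⁻¹ ^ n := by
  obtain ⟨m, rfl⟩ := Nat.exists_eq_add_of_le hk
  rw [cantorK, ← closedBall_prod_same, prod_inter_prod, Measure.volume_eq_prod,
    Measure.prod_prod]
  calc _ ≤ 2 * (4⁻¹ ^ k * 2⁻¹ ^ m) * (2 * (4⁻¹ ^ k * 2⁻¹ ^ m)) :=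
        mul_le_mul' (volume_cantorC_inter_closedBall_le k m z.1)
          (volume_cantorC_inter_closedBall_le k m z.2)
    _ = 4 * 4⁻¹ ^ k * 4⁻¹ ^ (k + m) := by rw [inv_four_eq_inv_two_mul_inv_two]; ring

lemma volume_closedBall_four_zpow_neg (z : ℝ × ℝ) (k : ℕ) :
    volume (closedBall z ((4 : ℝ) ^ (-(k : ℤ)))) = 4 * 4⁻¹ ^ k * 4⁻¹ ^ k := by
  rw [← closedBall_prod_same, Measure.volume_eq_prod, Measure.prod_prod]
  simp only [Real.volume_closedBall, ENNReal.ofReal_mul zero_le_two, ofReal_four_zpow_neg,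
    ENNReal.ofReal_ofNat]
  ring

lemma lintegral_ofReal_inv_dist_cantorK_le (n : ℕ) (y : ℝ × ℝ) :
    ∫⁻ x in cantorK n, ENNReal.ofReal (dist x y)⁻¹ ≤ (16 * n + 33) * 4⁻¹ ^ n := by
  set μ := volume.restrict (cantorK n)
  set T : ℕ → ℝ≥0∞ := fun k => 4 ^ (k + 1) * μ (closedBall y ((4 : ℝ) ^ (-(k : ℤ))))
  have hnear : ∀ k ≤ n, T k ≤ 16 * 4⁻¹ ^ n := fun k hk =>
    calc T k ≤ 4 ^ (k + 1) * (4 * 4⁻¹ ^ k * 4⁻¹ ^ n) := by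
          simp only [T, μ]
          rw [Measure.restrict_apply measurableSet_closedBall, inter_comm]
          gcongr
          exact volume_cantorK_inter_closedBall_le hk y
      _ = 4 ^ k * 4⁻¹ ^ k * (16 * 4⁻¹ ^ n) := by ring
      _ = 16 * 4⁻¹ ^ n := by rw [four_pow_mul_inv_four_pow, one_mul]
  have hfar : ∀ k, T k ≤ 16 * 4⁻¹ ^ k := fun k =>
    calc T k ≤ 4 ^ (k + 1) * volume (closedBall y ((4 : ℝ) ^ (-(k : ℤ)))) := by
          simp only [T]
          gcongr
          exact Measure.restrict_le_self
      _ = 4 ^ k * 4⁻¹ ^ k * (16 * 4⁻¹ ^ k) := by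
          rw [volume_closedBall_four_zpow_neg]; ring
      _ = 16 * 4⁻¹ ^ k := by rw [four_pow_mul_inv_four_pow, one_mul]
  have htail : ∑' j, (16 : ℝ≥0∞) * 4⁻¹ ^ (j + (n + 1)) ≤ 16 * 4⁻¹ ^ n := by
    have hsplit : ∀ j, (16 : ℝ≥0∞) * 4⁻¹ ^ (j + (n + 1)) = 16 * 4⁻¹ ^ n * 4⁻¹ ^ (j + 1) := by
      intro j; ring
    simp_rw [hsplit]
    rw [ENNReal.tsum_mul_left]
    exact mul_le_of_le_one_right' tsum_inv_four_pow_succ_le_one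
  calc _ ≤ μ univ + ∑' k, T k := lintegral_ofReal_inv_dist_le μ y
    _ = μ univ + (∑ k ∈ Finset.range (n + 1), T k + ∑' j, T (j + (n + 1))) := by
        rw [(ENNReal.summable (f := fun j => T (j + (n + 1)))).sum_add_tsum_nat_add']
    _ ≤ 4⁻¹ ^ n + (∑ _k ∈ Finset.range (n + 1), 16 * 4⁻¹ ^ n + 16 * 4⁻¹ ^ n) := by
        gcongr with k hk
        · rw [Measure.restrict_apply_univ]; exact volume_cantorK_le n
        · exact hnear k (Nat.lt_succ_iff.1 (Finset.mem_range.1 hk))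
        · exact (ENNReal.tsum_le_tsum fun j => hfar _).trans htail
    _ = (16 * n + 33) * 4⁻¹ ^ n := by
        rw [Finset.sum_const, Finset.card_range, nsmul_eq_mul]; push_cast; ring

lemma dist_le_euclDist (z ζ : ℝ × ℝ) : dist z ζ ≤ euclDist z ζ := by
  rw [Prod.dist_eq, Real.dist_eq, Real.dist_eq]
  exact max_le (Real.abs_le_sqrt (by nlinarith [sq_nonneg (z.2 - ζ.2)]))
    (Real.abs_le_sqrt (by nlinarith [sq_nonneg (z.1 - ζ.1)]))

lemma euclDist_nonneg (z ζ : ℝ × ℝ) : 0 ≤ euclDist z ζ := Real.sqrt_nonneg _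

lemma inv_euclDist_le_inv_dist (z ζ : ℝ × ℝ) : (euclDist z ζ)⁻¹ ≤ (dist z ζ)⁻¹ := by
  rcases eq_or_ne z ζ with rfl | h
  · simp [euclDist]
  · exact inv_anti₀ (dist_pos.2 h) (dist_le_euclDist z ζ)

lemma integral_inv_euclDist_cantorK_le (n : ℕ) (z : ℝ × ℝ) :
    ∫ ζ in cantorK n, (euclDist z ζ)⁻¹ ≤ (16 * n + 33) / 4 ^ n := by
  have hmeas : Measurable fun ζ => (euclDist z ζ)⁻¹ := by unfold euclDist; fun_prop
  rw [integral_eq_lintegral_of_nonneg_ae (ae_of_all _ fun ζ => inv_nonneg.2 (euclDist_nonneg z ζ))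
    hmeas.aestronglyMeasurable]
  have hlint : ∫⁻ ζ in cantorK n, ENNReal.ofReal (euclDist z ζ)⁻¹ ≤ (16 * n + 33) * 4⁻¹ ^ n :=
    (lintegral_mono fun ζ => ENNReal.ofReal_le_ofReal
      ((inv_euclDist_le_inv_dist z ζ).trans_eq (by rw [dist_comm]))).trans
      (lintegral_ofReal_inv_dist_cantorK_le n z)
  calc _ ≤ ((16 * n + 33) * 4⁻¹ ^ n : ℝ≥0∞).toReal :=
        ENNReal.toReal_mono (by simp [ENNReal.mul_eq_top]) hlint
    _ = (16 * n + 33) / 4 ^ n := by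
        simp only [ENNReal.toReal_mul, ENNReal.toReal_pow, ENNReal.toReal_inv, ENNReal.toReal_ofNat,
          div_eq_mul_inv, inv_pow]
        norm_cast

lemma integral_integral_inv_euclDist_cantorK_le (n : ℕ) :
    ∫ z in cantorK n, ∫ ζ in cantorK n, (euclDist z ζ)⁻¹ ≤ (16 * n + 33) / 16 ^ n := by
  have hvol : volume.real (cantorK n) ≤ (4 ^ n)⁻¹ := by
    refine (ENNReal.toReal_mono (by simp) (volume_cantorK_le n)).trans_eq ?_
    simp
  have hbound : ∀ z ∈ cantorK n, ‖∫ ζ in cantorK n, (euclDist z ζ)⁻¹‖ ≤ (16 * n + 33) / 4 ^ n :=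
    fun z _ => by
      rw [Real.norm_of_nonneg (integral_nonneg fun ζ => inv_nonneg.2 (euclDist_nonneg z ζ))]
      exact integral_inv_euclDist_cantorK_le n z
  calc _ ≤ ‖∫ z in cantorK n, ∫ ζ in cantorK n, (euclDist z ζ)⁻¹‖ := le_abs_self _
    _ ≤ (16 * n + 33) / 4 ^ n * volume.real (cantorK n) :=
        norm_setIntegral_le_of_norm_le_const ((volume_cantorK_le n).trans_lt (by simp)) hbound
    _ ≤ (16 * n + 33) / 4 ^ n * (4 ^ n)⁻¹ := by gcongr
    _ = (16 * n + 33) / 16 ^ n := by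
        rw [show (16 : ℝ) = 4 * 4 by norm_num, mul_pow]
        field_simp

/-- There exists `C > 0` such that for every `n ≥ 1`, the Riesz 1-energy of the
normalized measure `μ_n = 4^n · Leb|_{K_n}` satisfies
`∫∫ |z − ζ|⁻¹ dμ_n dμ_n = 16^n ∫_{K_n} ∫_{K_n} |z − ζ|⁻¹ dz dζ ≤ C · n`. -/
theorem riesz_energy_cantorK_le : ∃ C : ℝ, 0 < C ∧ ∀ n : ℕ, 1 ≤ n →
    (16 : ℝ) ^ n * ∫ z in cantorK n, ∫ ζ in cantorK n, (euclDist z ζ)⁻¹ ≤ C * n := by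
  refine ⟨49, by norm_num, fun n hn => ?_⟩
  have hn' : (1 : ℝ) ≤ n := by exact_mod_cast hn
  calc (16 : ℝ) ^ n * ∫ z in cantorK n, ∫ ζ in cantorK n, (euclDist z ζ)⁻¹
      ≤ 16 ^ n * ((16 * n + 33) / 16 ^ n) := by
        gcongr; exact integral_integral_inv_euclDist_cantorK_le n
    _ = 16 * n + 33 := mul_div_cancel₀ _ (by positivity)
    _ ≤ 49 * n := by linarith
end

section
/- The projection of the n-th generation four-corner Cantor set K_n onto the line at angle α = arctan(1/2) tiles a fixed interval: proj_α(K_n) = [0, 3/√5] for every n ∈ ℕ; moreover, for each square Q_{a,b} of K_n the projection proj_α(Q_{a,b}) is a 4-adic subinterval of [0, 3/√5] of the form [(3/√5)·m·4^{-n}, (3/√5)·(m+1)·4^{-n}] for some integer 0 ≤ m < 4^n, and distinct squares project onto intervals with disjoint interiors. -/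
open MeasureTheory Real Set

/-! Since `cos α = 2/√5` and `sin α = 1/√5`, the square `Q_{a,b}` projects onto the interval of
length `3·4⁻ⁿ/√5` starting at `(2 x_a + x_b)/√5`. Writing `a_j, b_j ∈ {0, 1}` for the binary digits,
`2 x_a + x_b = 3 ∑ (2 a_j + b_j) 4^{-j}`, and `(a_j, b_j) ↦ 2 a_j + b_j` is a bijection onto the
base-4 digits `{0,1,2,3}`. Hence the squares are in bijection with `m < 4ⁿ`, the square indexed by
`m` projecting onto the `m`-th of the `4ⁿ` consecutive intervals of length `3·4⁻ⁿ/√5` that tile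
`[0, 3/√5]`. -/

namespace Set

variable {K : Type*} [Field K] [LinearOrder K] [IsStrictOrderedRing K]

theorem image_linear_Icc_prod_Icc {c s L : K} (hc : 0 ≤ c) (hs : 0 ≤ s) (hL : 0 ≤ L) (p q : K) :
    (fun z : K × K => z.1 * c + z.2 * s) '' (Icc p (p + L) ×ˢ Icc q (q + L)) =
      Icc (p * c + q * s) (p * c + q * s + L * (c + s)) := by
  apply Subset.antisymm
  · rintro _ ⟨⟨x, y⟩, ⟨⟨hx₁, hx₂⟩, hy₁, hy₂⟩, rfl⟩
    constructor <;> nlinarith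
  · -- the diagonal `t ↦ (p + t, q + t)` of the square already covers the whole interval
    have hdiag : (fun t => (p * c + q * s) + t) '' ((fun t => t * (c + s)) '' Icc 0 L) ⊆
        (fun z : K × K => z.1 * c + z.2 * s) '' (Icc p (p + L) ×ˢ Icc q (q + L)) := by
      rintro _ ⟨_, ⟨t, ⟨ht₀, htL⟩, rfl⟩, rfl⟩
      exact ⟨(p + t, q + t), ⟨⟨by linarith, by linarith⟩, by linarith, by linarith⟩, by ring⟩
    rwa [image_mul_right_Icc hL (add_nonneg hc hs), zero_mul, image_const_add_Icc,
      add_zero] at hdiag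

theorem iUnion_Icc_natCast_add_one [FloorSemiring K] {N : ℕ} (hN : 0 < N) :
    ⋃ m : Fin N, Icc (m : K) (m + 1) = Icc 0 (N : K) := by
  ext t
  simp only [mem_iUnion, mem_Icc]
  constructor
  · rintro ⟨m, hm, ht⟩
    have hmN : (m : K) + 1 ≤ N := by exact_mod_cast m.isLt
    exact ⟨(Nat.cast_nonneg _).trans hm, ht.trans hmN⟩
  · rintro ⟨h₀, hN'⟩
    refine ⟨⟨min ⌊t⌋₊ (N - 1), by omega⟩, ?_, ?_⟩
    · calc ((min ⌊t⌋₊ (N - 1) : ℕ) : K) ≤ ⌊t⌋₊ := by exact_mod_cast min_le_left _ _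
        _ ≤ t := Nat.floor_le h₀
    · rcases min_choice ⌊t⌋₊ (N - 1) with h | h <;> simp only [h]
      · exact (Nat.lt_floor_add_one t).le
      · rw [Nat.cast_sub hN, Nat.cast_one, sub_add_cancel]
        exact hN'

theorem iUnion_Icc_natCast_mul [FloorSemiring K] {N : ℕ} (hN : 0 < N) {r : K} (hr : 0 ≤ r) :
    ⋃ m : Fin N, Icc ((m : K) * r) ((m + 1) * r) = Icc 0 (N * r) := by
  have hscale (m : Fin N) : Icc ((m : K) * r) ((m + 1) * r) = (· * r) '' Icc (m : K) (m + 1) :=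
    (image_mul_right_Icc (by linarith) hr).symm
  simp_rw [hscale, ← image_iUnion, iUnion_Icc_natCast_add_one hN,
    image_mul_right_Icc (Nat.cast_nonneg N) hr, zero_mul]

theorem disjoint_Ioo_natCast_mul (r : K) {m m' : ℕ} (h : m ≠ m') :
    Disjoint (Ioo ((m : K) * r) ((m + 1) * r)) (Ioo ((m' : K) * r) ((m' + 1) * r)) := by
  simpa [zsmul_eq_mul] using
    Set.pairwise_disjoint_Ioo_zsmul r (by exact_mod_cast h : (m : ℤ) ≠ m')

end Set

def digitPair : Bool × Bool ≃ Fin 4 where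
  toFun p := ⟨2 * p.1.toNat + p.2.toNat, by cases p.1 <;> cases p.2 <;> decide⟩
  invFun k := (2 ≤ (k : ℕ), (k : ℕ) % 2 = 1)
  left_inv := by decide
  right_inv := by decide

theorem two_mul_dig_add_dig (x y : Bool) : 2 * dig x + dig y = 3 * (digitPair (x, y) : ℕ) := by
  cases x <;> cases y <;> norm_num [dig, digitPair]

/-- `finFunctionFinEquiv` reads digits least significant first, whereas the first letter of a word
carries the largest weight `4⁻¹` in `x_a`; hence the reversal `Fin.revPerm`. -/
def squareIndex (n : ℕ) : (Fin n → Bool) × (Fin n → Bool) ≃ Fin (4 ^ n) :=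
  (Equiv.arrowProdEquivProdArrow _ (fun _ => Bool) (fun _ => Bool)).symm.trans
    ((Fin.revPerm.arrowCongr digitPair).trans finFunctionFinEquiv)

theorem squareIndex_val {n : ℕ} (a b : Fin n → Bool) :
    (squareIndex n (a, b) : ℕ) = ∑ i : Fin n, (digitPair (a i.rev, b i.rev) : ℕ) * 4 ^ (i : ℕ) := by
  simp [squareIndex]

theorem zpow_rev_mul_zpow_neg {G₀ : Type*} [GroupWithZero G₀] {x : G₀} (hx : x ≠ 0) {n : ℕ}
    (j : Fin n) :
    x ^ (j.rev : ℕ) * x ^ (-(n : ℤ)) = x ^ (-((j : ℕ) + 1) : ℤ) := by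
  rw [← zpow_natCast, ← zpow_add₀ hx, Fin.val_rev, Nat.cast_sub j.isLt]
  push_cast
  ring_nf

theorem two_mul_cantorX_add_cantorX {n : ℕ} (a b : Fin n → Bool) :
    2 * cantorX a + cantorX b = 3 * (squareIndex n (a, b) : ℕ) * (4 : ℝ) ^ (-(n : ℤ)) := by
  rw [squareIndex_val, cantorX, cantorX, Finset.mul_sum, ← Finset.sum_add_distrib]
  push_cast
  rw [Finset.mul_sum, Finset.sum_mul]
  refine Fintype.sum_equiv Fin.revPerm _ _ fun j => ?_
  rw [Fin.revPerm_apply, Fin.rev_rev, mul_assoc _ _ ((4 : ℝ) ^ _), mul_assoc _ _ ((4 : ℝ) ^ _),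
    zpow_rev_mul_zpow_neg (by norm_num)]
  linear_combination (4 : ℝ) ^ (-((j : ℕ) + 1) : ℤ) * two_mul_dig_add_dig (a j) (b j)

theorem Real.sqrt_one_add_half_sq : Real.sqrt (1 + (1 / 2) ^ 2) = Real.sqrt 5 / 2 := by
  rw [show (1 : ℝ) + (1 / 2) ^ 2 = 5 / 2 ^ 2 by norm_num, Real.sqrt_div' _ (by norm_num),
    Real.sqrt_sq (by norm_num)]

theorem Real.cos_arctan_half : Real.cos (Real.arctan (1 / 2)) = 2 / Real.sqrt 5 := by
  rw [Real.cos_arctan, Real.sqrt_one_add_half_sq, one_div_div]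

theorem Real.sin_arctan_half : Real.sin (Real.arctan (1 / 2)) = 1 / Real.sqrt 5 := by
  rw [Real.sin_arctan, Real.sqrt_one_add_half_sq]
  field_simp

theorem projAngle_image_Icc_prod_Icc {θ L : ℝ} (hcos : 0 ≤ Real.cos θ) (hsin : 0 ≤ Real.sin θ)
    (hL : 0 ≤ L) (p q : ℝ) :
    projAngle θ '' (Icc p (p + L) ×ˢ Icc q (q + L)) =
      Icc (projAngle θ (p, q)) (projAngle θ (p, q) + L * (Real.cos θ + Real.sin θ)) :=
  image_linear_Icc_prod_Icc hcos hsin hL p q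

theorem projAngle_image_cantorSq {n : ℕ} (a b : Fin n → Bool) :
    projAngle (Real.arctan (1 / 2)) '' cantorSq a b =
      Icc ((squareIndex n (a, b) : ℕ) * (3 / Real.sqrt 5 * (4 : ℝ) ^ (-(n : ℤ))))
        (((squareIndex n (a, b) : ℕ) + 1) * (3 / Real.sqrt 5 * (4 : ℝ) ^ (-(n : ℤ)))) := by
  rw [cantorSq, projAngle_image_Icc_prod_Icc (Real.cos_arctan_pos _).le
    (Real.sin_arctan_nonneg.2 (by norm_num)) (zpow_nonneg (by norm_num) _), projAngle,
    Real.cos_arctan_half, Real.sin_arctan_half]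
  have hx := two_mul_cantorX_add_cantorX a b
  congr 1
  · linear_combination hx / Real.sqrt 5
  · linear_combination hx / Real.sqrt 5

/-- The projection of `K_n` onto the line at angle `α = arctan(1/2)` tiles the interval
`[0, 3/√5]`: `proj_α(K_n) = [0, 3/√5]`; each square `Q_{a,b}` projects onto a 4-adic
subinterval `[(3/√5)·m·4^{-n}, (3/√5)·(m+1)·4^{-n}]` with `0 ≤ m < 4^n`, and distinct
squares project onto intervals with disjoint interiors. -/
theorem projection_cantorK_tiles : ∀ n : ℕ,
    projAngle (Real.arctan (1 / 2)) '' cantorK n = Icc 0 (3 / Real.sqrt 5) ∧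
    (∀ a b : Fin n → Bool, ∃ m : ℕ, m < 4 ^ n ∧
      projAngle (Real.arctan (1 / 2)) '' cantorSq a b =
        Icc (3 / Real.sqrt 5 * m * (4 : ℝ) ^ (-(n : ℤ)))
          (3 / Real.sqrt 5 * (m + 1) * (4 : ℝ) ^ (-(n : ℤ)))) ∧
    (∀ a b a' b' : Fin n → Bool, (a, b) ≠ (a', b') →
      interior (projAngle (Real.arctan (1 / 2)) '' cantorSq a b) ∩
        interior (projAngle (Real.arctan (1 / 2)) '' cantorSq a' b') = ∅) := by
  intro n
  set w : ℝ := 3 / Real.sqrt 5 * (4 : ℝ) ^ (-(n : ℤ))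
  refine ⟨?_, fun a b => ⟨_, (squareIndex n (a, b)).isLt, ?_⟩, fun a b a' b' hne => ?_⟩
  · have hcover : ⋃ p : (Fin n → Bool) × (Fin n → Bool), cantorSq p.1 p.2 = cantorK n := by
      rw [cantorK, cantorC, ← iUnion_prod]
      rfl
    have hw : ((4 ^ n : ℕ) : ℝ) * w = 3 / Real.sqrt 5 := by
      rw [mul_left_comm, Nat.cast_pow, Nat.cast_ofNat, ← zpow_natCast, ← zpow_add₀ (by norm_num),
        add_neg_cancel, zpow_zero, mul_one]
    rw [← hcover, image_iUnion]
    simp_rw [projAngle_image_cantorSq]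
    rw [(squareIndex n).surjective.iUnion_comp (fun m => Icc ((m : ℕ) * w) (((m : ℕ) + 1) * w)),
      iUnion_Icc_natCast_mul (by positivity) (by positivity), hw]
  · rw [projAngle_image_cantorSq]
    congr 1 <;> ring
  · rw [projAngle_image_cantorSq, projAngle_image_cantorSq, interior_Icc, interior_Icc,
      ← disjoint_iff_inter_eq_empty]
    exact disjoint_Ioo_natCast_mul w (Fin.val_injective.ne ((squareIndex n).injective.ne hne))
end
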